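/- For the general Markov model on the binary 4-leaf tree with split {12|34}, given by p_{ijkl} = Σ_{s,t ∈ Fin 2} π_s · a_{s t} · u_{s i} · v_{s j} · w_{t k} · x_{t l} (root with two internal states, transition a between the two internal nodes, and leaf matrices u,v,w,x), the 4×4 flattening matrix M with M_{(i,j),(k,l)} = p_{ijkl} has rank at most 2, i.e., all its 3×3 minors vanish. -/
import Mathlib


/-- For the general Markov model on the binary 4-leaf tree with split `{12|34}`,
`p i j k l = Σ s t, π s * a s t * u s i * v s j * w t k * x t l`, all 3×3 minors of the
4×4 flattening matrix vanish (so the flattening has rank at most 2). -/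
theorem stmt_10 {R : Type*} [CommRing R] (π : Fin 2 → R) (a : Fin 2 → Fin 2 → R)
    (u v w x : Fin 2 → Fin 2 → R)
    (p : Fin 2 → Fin 2 → Fin 2 → Fin 2 → R)
    (hp : ∀ i j k l, p i j k l =
      ∑ s : Fin 2, ∑ t : Fin 2, π s * a s t * u s i * v s j * w t k * x t l)
    (M : Matrix (Fin 2 × Fin 2) (Fin 2 × Fin 2) R)
    (hM : ∀ i j k l, M (i, j) (k, l) = p i j k l) :
    ∀ (r c : Fin 3 → Fin 2 × Fin 2),
      (Matrix.of fun a b => M (r a) (c b)).det = 0 := by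
  intro r c
  have h : ∀ q q' : Fin 2 × Fin 2, M q q' = p q.1 q.2 q'.1 q'.2 := by
    rintro ⟨i, j⟩ ⟨k, l⟩; exact hM i j k l
  simp only [Matrix.det_fin_three, Matrix.of_apply, h, hp, Fin.sum_univ_two]
  ring
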